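/- Let d ≥ 1, T > 0, and let a ∈ C^∞(ℝ^d) be bounded with bounded derivatives. Define on ℝ^d×ℝ^d the escape function c(x,ξ) = (2/T)∫₀^T ∫₀^t a(x+2sξ) ds dt, b = e^c, and the flow average ⟨a⟩_T(x,ξ) = (1/T)∫₀^T a(x+2tξ) dt. Then for all (x,ξ): 2a(x) b(x,ξ) + {|ξ|², b}(x,ξ) = 2 b(x,ξ) ⟨a⟩_T(x,ξ), where {|ξ|², b} = 2ξ·∇_x b denotes the Poisson bracket of |ξ|² with b. In particular, if (1/T)∫₀^T a(x+2tξ) dt ≥ α for all (x,ξ) in a set Σ, then 2ab + {|ξ|²,b} ≥ 2αe^{c} ≥ 2α > 0 on Σ provided a ≥ 0 (so c ≥ 0). -/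

import Mathlib

/-!
STATEMENT 15: the escape-function identity behind the positive-commutator
argument under the Geometric Control Condition.  On `T*ℝ^d`, with
`c(x,ξ) = (2/T)∫₀^T∫₀^t a(x+2sξ) ds dt`, `b = e^c`, and
`⟨a⟩_T(x,ξ) = (1/T)∫₀^T a(x+2tξ) dt`, one has
`2ab + {|ξ|²,b} = 2b⟨a⟩_T`, where `{|ξ|²,b} = 2ξ·∇_x b`.
-/

open Real RealInnerProductSpace intervalIntegral

/-- The escape function `c(x,ξ) = (2/T)∫₀^T ∫₀^t a(x+2sξ) ds dt`. -/
noncomputable def escapeC {d : ℕ} (T : ℝ) (a : EuclideanSpace ℝ (Fin d) → ℝ)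
    (x ξ : EuclideanSpace ℝ (Fin d)) : ℝ :=
  (2 / T) * ∫ t in (0:ℝ)..T, ∫ s in (0:ℝ)..t, a (x + (2 * s) • ξ)

/-- The commutant symbol `b = e^c`. -/
noncomputable def escapeB {d : ℕ} (T : ℝ) (a : EuclideanSpace ℝ (Fin d) → ℝ)
    (x ξ : EuclideanSpace ℝ (Fin d)) : ℝ :=
  Real.exp (escapeC T a x ξ)

/-- The flow average `⟨a⟩_T(x,ξ) = (1/T)∫₀^T a(x+2tξ) dt` along the
Hamiltonian flow `φ_t(x,ξ) = (x+2tξ, ξ)` of `|ξ|²`. -/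
noncomputable def flowAvg {d : ℕ} (T : ℝ) (a : EuclideanSpace ℝ (Fin d) → ℝ)
    (x ξ : EuclideanSpace ℝ (Fin d)) : ℝ :=
  (1 / T) * ∫ t in (0:ℝ)..T, a (x + (2 * t) • ξ)

/-- For real-valued functions on a Hilbert space, pairing a vector with the gradient
computes the Fréchet derivative in that direction. -/
lemma inner_gradient_eq_fderiv {d : ℕ} (f : EuclideanSpace ℝ (Fin d) → ℝ)
    (x ξ : EuclideanSpace ℝ (Fin d)) :
    ⟪ξ, gradient f x⟫ = fderiv ℝ f x ξ := by
  rw [real_inner_comm, gradient, ← InnerProductSpace.toDual_apply_apply,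
    LinearIsometryEquiv.apply_symm_apply]

/-- A bound on the first iterated Fréchet derivative gives a bound on the Fréchet derivative. -/
lemma fderiv_bound {d : ℕ} (a : EuclideanSpace ℝ (Fin d) → ℝ) {C : ℝ}
    (h : ∀ x, ‖iteratedFDeriv ℝ 1 a x‖ ≤ C) (y : EuclideanSpace ℝ (Fin d)) :
    ‖fderiv ℝ a y‖ ≤ C := by
  refine ContinuousLinearMap.opNorm_le_bound _ ((norm_nonneg _).trans (h y)) fun v => ?_
  have hv : fderiv ℝ a y v = iteratedFDeriv ℝ 1 a y ![v] := by
    rw [iteratedFDeriv_one_apply]; rfl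
  rw [hv]
  calc ‖iteratedFDeriv ℝ 1 a y ![v]‖ ≤ ‖iteratedFDeriv ℝ 1 a y‖ * ∏ i, ‖(![v] : Fin 1 → _) i‖ :=
        (iteratedFDeriv ℝ 1 a y).le_opNorm _
    _ ≤ C * ‖v‖ := by
        have hp : (∏ i, ‖(![v] : Fin 1 → _) i‖) = ‖v‖ := by simp
        rw [hp]
        exact mul_le_mul_of_nonneg_right (h y) (norm_nonneg v)

/-- The key differentiation-under-the-integral computation: `x ↦ c(x,ξ)` is differentiable
and its derivative in the direction `ξ` equals `⟨a⟩_T(x,ξ) - a(x)`. -/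
lemma hasFDerivAt_escapeC {d : ℕ} (T : ℝ) (hT : 0 < T)
    (a : EuclideanSpace ℝ (Fin d) → ℝ) (ha : ContDiff ℝ (⊤ : ℕ∞) a)
    {C : ℝ} (hC : ∀ y, ‖fderiv ℝ a y‖ ≤ C) (x ξ : EuclideanSpace ℝ (Fin d)) :
    ∃ D : EuclideanSpace ℝ (Fin d) →L[ℝ] ℝ,
      HasFDerivAt (fun x' => escapeC T a x' ξ) D x ∧ D ξ = flowAvg T a x ξ - a x := by
  have ha1 : Differentiable ℝ a := ha.differentiable (by simp)
  have hac : Continuous a := ha.continuous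
  have hfc : Continuous (fderiv ℝ a) := ha.continuous_fderiv (by simp)
  have hγ : ∀ y : EuclideanSpace ℝ (Fin d), Continuous fun s : ℝ => y + (2 * s) • ξ := by
    intro y; continuity
  -- pointwise differentiability of translates
  have hcomp_diff : ∀ (y v : EuclideanSpace ℝ (Fin d)),
      HasFDerivAt (fun z => a (z + v)) (fderiv ℝ a (y + v)) y := by
    intro y v
    have h2 : HasFDerivAt (fun z : EuclideanSpace ℝ (Fin d) => z + v)
        (ContinuousLinearMap.id ℝ _) y := (hasFDerivAt_id y).add_const v
    have h3 := (ha1 (y + v)).hasFDerivAt.comp y h2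
    rw [ContinuousLinearMap.comp_id] at h3
    exact h3
  -- inner parametric integral
  have hInner : ∀ (y : EuclideanSpace ℝ (Fin d)) (t : ℝ),
      HasFDerivAt (fun z => ∫ s in (0:ℝ)..t, a (z + (2 * s) • ξ))
        (∫ s in (0:ℝ)..t, fderiv ℝ a (y + (2 * s) • ξ)) y := by
    intro y t
    exact intervalIntegral.hasFDerivAt_integral_of_dominated_of_fderiv_le
      (F := fun z s => a (z + (2 * s) • ξ))
      (F' := fun z s => fderiv ℝ a (z + (2 * s) • ξ)) (bound := fun _ => C) (Metric.ball_mem_nhds _ one_pos)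
      (Filter.Eventually.of_forall fun z => (hac.comp (hγ z)).aestronglyMeasurable)
      ((hac.comp (hγ y)).intervalIntegrable 0 t)
      ((hfc.comp (hγ y)).aestronglyMeasurable)
      (Filter.Eventually.of_forall fun s _ z _ => hC _)
      (intervalIntegrable_const)
      (Filter.Eventually.of_forall fun s _ z _ => hcomp_diff z _)
  have hInnerCont : ∀ y : EuclideanSpace ℝ (Fin d),
      Continuous fun t => ∫ s in (0:ℝ)..t, a (y + (2 * s) • ξ) := fun y =>
    intervalIntegral.continuous_primitive (fun u v => (hac.comp (hγ y)).intervalIntegrable u v) 0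
  have hDcont : Continuous fun t => ∫ s in (0:ℝ)..t, fderiv ℝ a (x + (2 * s) • ξ) :=
    intervalIntegral.continuous_primitive (fun u v => (hfc.comp (hγ x)).intervalIntegrable u v) 0
  -- outer parametric integral
  have hOuter : HasFDerivAt
      (fun z => ∫ t in (0:ℝ)..T, ∫ s in (0:ℝ)..t, a (z + (2 * s) • ξ))
      (∫ t in (0:ℝ)..T, ∫ s in (0:ℝ)..t, fderiv ℝ a (x + (2 * s) • ξ)) x := by
    refine intervalIntegral.hasFDerivAt_integral_of_dominated_of_fderiv_le
      (F := fun z t => ∫ s in (0:ℝ)..t, a (z + (2 * s) • ξ))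
      (F' := fun z t => ∫ s in (0:ℝ)..t, fderiv ℝ a (z + (2 * s) • ξ))
      (bound := fun t => C * |t|) (Metric.ball_mem_nhds _ one_pos)
      (Filter.Eventually.of_forall fun z => (hInnerCont z).aestronglyMeasurable)
      ((hInnerCont x).intervalIntegrable 0 T)
      (hDcont.aestronglyMeasurable)
      (Filter.Eventually.of_forall fun t _ z _ => ?_)
      ((continuous_const.mul continuous_abs).intervalIntegrable 0 T)
      (Filter.Eventually.of_forall fun t _ z _ => hInner z t)
    have := intervalIntegral.norm_integral_le_of_norm_le_const
      (f := fun s => fderiv ℝ a (z + (2 * s) • ξ)) (C := C) (a := 0) (b := t)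
      (fun s _ => hC _)
    simpa using this
  -- full derivative of escapeC
  set D0 : EuclideanSpace ℝ (Fin d) →L[ℝ] ℝ :=
    ∫ t in (0:ℝ)..T, ∫ s in (0:ℝ)..t, fderiv ℝ a (x + (2 * s) • ξ) with hD0
  refine ⟨(2 / T) • D0, ?_, ?_⟩
  · have := hOuter.const_mul (2 / T)
    simpa [escapeC] using this
  -- evaluation at ξ
  have happly : D0 ξ = ∫ t in (0:ℝ)..T,
      (∫ s in (0:ℝ)..t, fderiv ℝ a (x + (2 * s) • ξ)) ξ := by
    rw [hD0]
    exact ContinuousLinearMap.intervalIntegral_apply (hDcont.intervalIntegrable 0 T) ξ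
  have happly2 : ∀ t : ℝ, (∫ s in (0:ℝ)..t, fderiv ℝ a (x + (2 * s) • ξ)) ξ
      = ∫ s in (0:ℝ)..t, fderiv ℝ a (x + (2 * s) • ξ) ξ := fun t =>
    ContinuousLinearMap.intervalIntegral_apply ((hfc.comp (hγ x)).intervalIntegrable 0 t) ξ
  -- FTC along the flow
  have hpathd : ∀ s : ℝ, HasDerivAt (fun s : ℝ => x + (2 * s) • ξ) ((2:ℝ) • ξ) s := by
    intro s
    have heq : (fun s : ℝ => x + (2 * s) • ξ) = fun s : ℝ => x + s • ((2:ℝ) • ξ) := by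
      funext s; rw [smul_smul, mul_comm]
    rw [heq]
    simpa using ((hasDerivAt_id s).smul_const ((2:ℝ) • ξ)).const_add x
  have hud : ∀ s : ℝ, HasDerivAt (fun s : ℝ => a (x + (2 * s) • ξ))
      (2 * fderiv ℝ a (x + (2 * s) • ξ) ξ) s := by
    intro s
    have := (ha1 (x + (2 * s) • ξ)).hasFDerivAt.comp_hasDerivAt s (hpathd s)
    rw [ContinuousLinearMap.map_smul, smul_eq_mul] at this
    exact this
  have hwcont : Continuous fun s : ℝ => fderiv ℝ a (x + (2 * s) • ξ) ξ :=
    (hfc.comp (hγ x)).clm_apply continuous_const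
  have hFTC : ∀ t : ℝ, ∫ s in (0:ℝ)..t, fderiv ℝ a (x + (2 * s) • ξ) ξ
      = (a (x + (2 * t) • ξ) - a x) / 2 := by
    intro t
    have h2 := intervalIntegral.integral_eq_sub_of_hasDerivAt (f := fun s : ℝ => a (x + (2 * s) • ξ))
      (f' := fun s : ℝ => 2 * fderiv ℝ a (x + (2 * s) • ξ) ξ)
      (fun s _ => hud s) ((continuous_const.mul hwcont).intervalIntegrable 0 t)
    rw [intervalIntegral.integral_const_mul] at h2
    have h2' : 2 * (∫ s in (0:ℝ)..t, fderiv ℝ a (x + (2 * s) • ξ) ξ)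
        = a (x + (2 * t) • ξ) - a x := by simpa using h2
    linarith
  have hIcont : Continuous fun t : ℝ => a (x + (2 * t) • ξ) := hac.comp (hγ x)
  calc ((2 / T) • D0) ξ = (2 / T) * D0 ξ := rfl
    _ = (2 / T) * ∫ t in (0:ℝ)..T, (a (x + (2 * t) • ξ) - a x) / 2 := by
        rw [happly]
        congr 1
        refine intervalIntegral.integral_congr fun t _ => ?_
        rw [happly2 t, hFTC t]
    _ = flowAvg T a x ξ - a x := by
        have heq : ∀ t : ℝ, (a (x + (2 * t) • ξ) - a x) / 2
            = (1/2) * a (x + (2 * t) • ξ) - (1/2) * a x := fun t => by ring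
        simp_rw [heq]
        rw [intervalIntegral.integral_sub (f := fun t => (1/2:ℝ) * a (x + (2 * t) • ξ))
            ((continuous_const.mul hIcont).intervalIntegrable 0 T)
          (intervalIntegrable_const), intervalIntegral.integral_const_mul,
          intervalIntegral.integral_const, flowAvg]
        field_simp
        ring

theorem escape_function_identity
    (d : ℕ) (T : ℝ) (hT : 0 < T)
    (a : EuclideanSpace ℝ (Fin d) → ℝ)
    (ha_smooth : ContDiff ℝ (⊤ : ℕ∞) a)
    (ha_bdd : ∀ n : ℕ, ∃ C : ℝ, ∀ x, ‖iteratedFDeriv ℝ n a x‖ ≤ C) :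
    -- the exact identity 2ab + {|ξ|²,b} = 2b⟨a⟩_T:
    (∀ x ξ : EuclideanSpace ℝ (Fin d),
        2 * a x * escapeB T a x ξ
            + 2 * ⟪ξ, gradient (fun x' => escapeB T a x' ξ) x⟫
          = 2 * escapeB T a x ξ * flowAvg T a x ξ) ∧
    -- in particular: a ≥ 0 and ⟨a⟩_T ≥ α on a set Σ give positivity there
    (∀ α : ℝ, 0 < α → (∀ x, 0 ≤ a x) →
      ∀ S : Set (EuclideanSpace ℝ (Fin d) × EuclideanSpace ℝ (Fin d)),
        (∀ p ∈ S, α ≤ flowAvg T a p.1 p.2) →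
        ∀ p ∈ S,
          2 * α * Real.exp (escapeC T a p.1 p.2)
              ≤ 2 * a p.1 * escapeB T a p.1 p.2
                + 2 * ⟪p.2, gradient (fun x' => escapeB T a x' p.2) p.1⟫
          ∧ 2 * α ≤ 2 * α * Real.exp (escapeC T a p.1 p.2)
          ∧ 0 < 2 * α) := by
  obtain ⟨C, hC⟩ := ha_bdd 1
  have hC' : ∀ y, ‖fderiv ℝ a y‖ ≤ C := fderiv_bound a hC
  have hmain : ∀ x ξ : EuclideanSpace ℝ (Fin d),
      2 * a x * escapeB T a x ξ
          + 2 * ⟪ξ, gradient (fun x' => escapeB T a x' ξ) x⟫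
        = 2 * escapeB T a x ξ * flowAvg T a x ξ := by
    intro x ξ
    obtain ⟨D, hD, hDξ⟩ := hasFDerivAt_escapeC T hT a ha_smooth hC' x ξ
    have hb : HasFDerivAt (fun x' => escapeB T a x' ξ)
        (Real.exp (escapeC T a x ξ) • D) x := by
      simpa [escapeB] using hD.exp
    rw [inner_gradient_eq_fderiv, hb.fderiv]
    have : (Real.exp (escapeC T a x ξ) • D) ξ = Real.exp (escapeC T a x ξ) * D ξ := rfl
    rw [this, hDξ, escapeB]
    ring
  refine ⟨hmain, ?_⟩
  intro α hα hpos S hS p hp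
  have hcnn : 0 ≤ escapeC T a p.1 p.2 := by
    apply mul_nonneg (by positivity)
    exact intervalIntegral.integral_nonneg hT.le fun t ht =>
      intervalIntegral.integral_nonneg ht.1 fun s _ => hpos _
  have hexp : (0:ℝ) < Real.exp (escapeC T a p.1 p.2) := Real.exp_pos _
  refine ⟨?_, ?_, by linarith⟩
  · rw [hmain p.1 p.2, escapeB]
    have h1 : 2 * α * Real.exp (escapeC T a p.1 p.2)
        ≤ 2 * Real.exp (escapeC T a p.1 p.2) * flowAvg T a p.1 p.2 := by
      have := hS p hp
      nlinarith
    exact h1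
  · nlinarith [Real.one_le_exp hcnn]
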